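/- Let m ≥ 2, and for β, γ ∈ ℝ define the batch normalization map B^{(β,γ)} : ℝ^m → ℝ^m componentwise by B^{(β,γ)}(b)_i = γ·(b_i − μ_b)/σ_b + β, where μ_b = (1/m)·Σᵢ bᵢ and σ_b² = (1/m)·Σᵢ (bᵢ − μ_b)². Then for every differentiable r : ℝ^m → ℝ and every b ∈ ℝ^m with σ_b > 0, ‖∇(r ∘ B^{(β,γ)})(b)‖₂² = (γ²/σ_b²)·( ‖∇r(B^{(β,γ)}(b))‖₂² − (1/m)·⟨𝟏, ∇r(B^{(β,γ)}(b))⟩² − (1/m)·⟨B^{(0,1)}(b), ∇r(B^{(β,γ)}(b))⟩² ), where 𝟏 = (1,…,1) ∈ ℝ^m. -/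

import Mathlib

/-!
With `P` the orthogonal projection onto `𝟏ᗮ`, the centred batch is `c = P b`, `σ_b = ‖c‖ / √m`,
and `B^{(β,γ)}(b) = γ √m · c / ‖c‖ + β 𝟏`. The derivative of `y ↦ y / ‖y‖` at `c` is `‖c‖⁻¹`
times the projection onto `cᗮ`, so the Jacobian of `B^{(β,γ)}` is `(γ / σ_b) · P_{cᗮ} ∘ P`.
Both factors are self-adjoint, hence `∇(r ∘ B)(b) = (γ / σ_b) · P (P_{cᗮ} ∇r)`, the projection
of `∇r` onto `{𝟏, c}ᗮ`. As `𝟏 ⊥ c`, Pythagoras applied twice gives its squared norm, and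
`‖𝟏‖² = m`, `B^{(0,1)}(b) = √m · c / ‖c‖` put it in the stated form.
-/

open scoped RealInnerProductSpace

/-- The empirical mean of the batch `b`. -/
noncomputable def bnMean (m : ℕ) (b : EuclideanSpace ℝ (Fin m)) : ℝ :=
  (∑ i, b i) / m

/-- The empirical variance `σ_b²` of the batch `b`. -/
noncomputable def bnVar (m : ℕ) (b : EuclideanSpace ℝ (Fin m)) : ℝ :=
  (∑ i, (b i - bnMean m b) ^ 2) / m

/-- The batch normalization map `B^{(β,γ)}(b)_i = γ·(b_i − μ_b)/σ_b + β`. -/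
noncomputable def bn (m : ℕ) (β γ : ℝ) (b : EuclideanSpace ℝ (Fin m)) :
    EuclideanSpace ℝ (Fin m) :=
  WithLp.toLp 2 (fun i => γ * (b i - bnMean m b) / Real.sqrt (bnVar m b) + β)

/-- The all-ones vector `𝟏 ∈ ℝ^m`. -/
noncomputable def onesVec (m : ℕ) : EuclideanSpace ℝ (Fin m) := WithLp.toLp 2 (fun _ => 1)

section General

variable {E F : Type*} [NormedAddCommGroup E] [InnerProductSpace ℝ E]
  [NormedAddCommGroup F] [InnerProductSpace ℝ F]

theorem HasGradientAt.comp_hasFDerivAt [CompleteSpace E] [CompleteSpace F]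
    {r : F → ℝ} {f : E → F} {g : F} {L : E →L[ℝ] F} {x : E}
    (hr : HasGradientAt r g (f x)) (hf : HasFDerivAt f L x) :
    HasGradientAt (r ∘ f) (L.adjoint g) x := by
  rw [hasGradientAt_iff_hasFDerivAt] at hr ⊢
  have hdual : InnerProductSpace.toDual ℝ E (L.adjoint g)
      = (InnerProductSpace.toDual ℝ F g).comp L := by
    ext v
    simp [ContinuousLinearMap.adjoint_inner_left]
  rw [hdual]
  exact hr.comp x hf

theorem hasFDerivAt_inv_norm_smul {x : E} (hx : x ≠ 0) :
    HasFDerivAt (fun y : E => ‖y‖⁻¹ • y) (‖x‖⁻¹ • (ℝ ∙ x)ᗮ.starProjection) x := by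
  have hx' : ‖x‖ ≠ 0 := norm_ne_zero_iff.mpr hx
  have hnorm : HasFDerivAt (fun y : E => ‖y‖) ((‖x‖⁻¹) • innerSL ℝ x) x := by
    have := (hasStrictFDerivAt_norm_sq x).hasFDerivAt.sqrt (by positivity)
    simp only [Real.sqrt_sq (norm_nonneg _)] at this
    convert this using 1
    ext v
    simp only [smul_apply, coe_innerSL_apply, smul_eq_mul, one_div,
      mul_inv_rev, nsmul_eq_mul, Nat.cast_ofNat]
    ring
  have hinv := ((hasDerivAt_inv hx').comp_hasFDerivAt x hnorm).smul (hasFDerivAt_id x)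
  have hderiv : ‖x‖⁻¹ • (ℝ ∙ x)ᗮ.starProjection = ‖x‖⁻¹ • ContinuousLinearMap.id ℝ E
      + (-(‖x‖ ^ 2)⁻¹ • ‖x‖⁻¹ • innerSL ℝ x).smulRight x := by
    ext v
    simp only [smul_apply, Submodule.starProjection_orthogonal_val,
      Submodule.starProjection_singleton, Real.ringHom_apply, neg_smul,
      add_apply, ContinuousLinearMap.id_apply,
      ContinuousLinearMap.smulRight_apply, neg_apply, coe_innerSL_apply,
      smul_eq_mul]
    module
  rw [hderiv]
  exact hinv

theorem norm_starProjection_orthogonal_singleton_sq (u g : E) :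
    ‖(ℝ ∙ u)ᗮ.starProjection g‖ ^ 2 = ‖g‖ ^ 2 - ⟪u, g⟫ ^ 2 / ‖u‖ ^ 2 := by
  have hpyth := Submodule.norm_sq_eq_add_norm_sq_starProjection g (ℝ ∙ u)
  have hline : ‖(ℝ ∙ u).starProjection g‖ ^ 2 = ⟪u, g⟫ ^ 2 / ‖u‖ ^ 2 := by
    rw [Submodule.starProjection_singleton, RCLike.ofReal_real_eq_id, id, norm_smul, mul_pow,
      Real.norm_eq_abs, sq_abs]
    rcases eq_or_ne ‖u‖ 0 with hu | hu
    · simp [hu]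
    · field_simp
  linarith

theorem norm_starProjection_orthogonal_singleton_comp_sq {u v : E} (huv : ⟪u, v⟫ = 0) (g : E) :
    ‖(ℝ ∙ u)ᗮ.starProjection ((ℝ ∙ v)ᗮ.starProjection g)‖ ^ 2
      = ‖g‖ ^ 2 - ⟪v, g⟫ ^ 2 / ‖v‖ ^ 2 - ⟪u, g⟫ ^ 2 / ‖u‖ ^ 2 := by
  have hu : (ℝ ∙ v)ᗮ.starProjection u = u :=
    Submodule.starProjection_eq_self_iff.mpr
      (Submodule.mem_orthogonal_singleton_iff_inner_left.mpr huv)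
  rw [norm_starProjection_orthogonal_singleton_sq, norm_starProjection_orthogonal_singleton_sq,
    ← Submodule.inner_starProjection_left_eq_right, hu]

end General

section BatchNorm

variable {m : ℕ}

theorem norm_onesVec_sq : ‖onesVec m‖ ^ 2 = m := by
  simp [EuclideanSpace.norm_sq_eq, onesVec]

/-- Centring `b ↦ b - μ_b 𝟏`, realised as the orthogonal projection onto `𝟏ᗮ`. -/
noncomputable def bnCenter (m : ℕ) :
    EuclideanSpace ℝ (Fin m) →L[ℝ] EuclideanSpace ℝ (Fin m) :=
  (ℝ ∙ onesVec m)ᗮ.starProjection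

theorem bnCenter_apply (b : EuclideanSpace ℝ (Fin m)) (i : Fin m) :
    bnCenter m b i = b i - bnMean m b := by
  simp only [bnCenter, Submodule.starProjection_orthogonal_val,
    Submodule.starProjection_singleton, norm_onesVec_sq]
  simp [bnMean, onesVec, PiLp.inner_apply]

theorem inner_onesVec_bnCenter (b : EuclideanSpace ℝ (Fin m)) : ⟪onesVec m, bnCenter m b⟫ = 0 :=
  Submodule.mem_orthogonal_singleton_iff_inner_right.mp (Submodule.starProjection_apply_mem _ _)

theorem bnVar_eq_norm_sq (b : EuclideanSpace ℝ (Fin m)) : bnVar m b = ‖bnCenter m b‖ ^ 2 / m := by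
  simp [bnVar, EuclideanSpace.norm_sq_eq, bnCenter_apply]

theorem bn_eq (β γ : ℝ) (b : EuclideanSpace ℝ (Fin m)) :
    bn m β γ b = (γ * √m) • (‖bnCenter m b‖⁻¹ • bnCenter m b) + β • onesVec m := by
  ext i
  simp only [bn, bnVar_eq_norm_sq, norm_nonneg, pow_succ_nonneg, Real.sqrt_div, Real.sqrt_sq,
    onesVec, PiLp.add_apply, PiLp.smul_apply, bnCenter_apply, smul_eq_mul, mul_one, add_left_inj]
  rw [div_div_eq_mul_div]
  ring

theorem hasFDerivAt_bn (β γ : ℝ) {b : EuclideanSpace ℝ (Fin m)} (hb : bnCenter m b ≠ 0) :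
    HasFDerivAt (bn m β γ) ((γ * √m) • ((‖bnCenter m b‖⁻¹ •
      (ℝ ∙ bnCenter m b)ᗮ.starProjection) ∘L bnCenter m)) b := by
  rw [show bn m β γ = _ from funext (bn_eq β γ)]
  exact (((hasFDerivAt_inv_norm_smul hb).comp b (bnCenter m).hasFDerivAt).const_smul
    (γ * √m)).add_const (β • onesVec m)

theorem gradient_comp_bn (β γ : ℝ) {r : EuclideanSpace ℝ (Fin m) → ℝ}
    {b : EuclideanSpace ℝ (Fin m)} (hr : DifferentiableAt ℝ r (bn m β γ b))
    (hb : bnCenter m b ≠ 0) :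
    gradient (r ∘ bn m β γ) b = (γ * √m * ‖bnCenter m b‖⁻¹) • (ℝ ∙ onesVec m)ᗮ.starProjection
      ((ℝ ∙ bnCenter m b)ᗮ.starProjection (gradient r (bn m β γ b))) := by
  rw [(hr.hasGradientAt.comp_hasFDerivAt (hasFDerivAt_bn β γ hb)).gradient]
  simp [ContinuousLinearMap.adjoint_comp, (isSelfAdjoint_starProjection _).adjoint_eq, bnCenter,
    smul_smul]

end BatchNorm

theorem batchnorm_gradient_identity_general
    (m : ℕ) (β γ : ℝ)
    (r : EuclideanSpace ℝ (Fin m) → ℝ) (hr : Differentiable ℝ r)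
    (b : EuclideanSpace ℝ (Fin m)) (hσ : 0 < bnVar m b) :
    ‖gradient (r ∘ bn m β γ) b‖ ^ 2
      = γ ^ 2 / bnVar m b *
          (‖gradient r (bn m β γ b)‖ ^ 2
            - (1 / m) * ⟪onesVec m, gradient r (bn m β γ b)⟫ ^ 2
            - (1 / m) * ⟪bn m 0 1 b, gradient r (bn m β γ b)⟫ ^ 2) := by
  have hc : ‖bnCenter m b‖ ≠ 0 := by
    rintro hc
    simp [bnVar_eq_norm_sq, hc] at hσ
  have hm0 : (m : ℝ) ≠ 0 := by
    rintro hm0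
    simp [bnVar_eq_norm_sq, hm0] at hσ
  have hstd : bn m 0 1 b = (√m * ‖bnCenter m b‖⁻¹) • bnCenter m b := by
    simp [bn_eq, smul_smul]
  rw [gradient_comp_bn β γ (hr _) (norm_ne_zero_iff.mp hc), norm_smul, mul_pow,
    norm_starProjection_orthogonal_singleton_comp_sq (inner_onesVec_bnCenter b), hstd,
    norm_onesVec_sq, bnVar_eq_norm_sq, real_inner_smul_left]
  have hsqrt : √(m : ℝ) ^ 2 = m := Real.sq_sqrt (Nat.cast_nonneg m)
  simp only [Real.norm_eq_abs, sq_abs, mul_pow, inv_pow, hsqrt]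
  field_simp
  ring

/-- Smoothening effect of batch normalization: for every differentiable `r` and every
batch `b` with `σ_b > 0`,
`‖∇(r ∘ B^{(β,γ)})(b)‖² = (γ²/σ_b²)·(‖∇r(B^{(β,γ)}(b))‖² − (1/m)·⟨𝟏, ∇r(B^{(β,γ)}(b))⟩²
− (1/m)·⟨B^{(0,1)}(b), ∇r(B^{(β,γ)}(b))⟩²)`. -/
theorem batchnorm_gradient_identity
    (m : ℕ) (hm : 2 ≤ m) (β γ : ℝ)
    (r : EuclideanSpace ℝ (Fin m) → ℝ) (hr : Differentiable ℝ r)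
    (b : EuclideanSpace ℝ (Fin m)) (hσ : 0 < bnVar m b) :
    ‖gradient (r ∘ bn m β γ) b‖ ^ 2
      = γ ^ 2 / bnVar m b *
          (‖gradient r (bn m β γ b)‖ ^ 2
            - (1 / m) * ⟪onesVec m, gradient r (bn m β γ b)⟫ ^ 2
            - (1 / m) * ⟪bn m 0 1 b, gradient r (bn m β γ b)⟫ ^ 2) :=
  batchnorm_gradient_identity_general m β γ r hr b hσ
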